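/- (Remark 1 equality.) For any λ ∈ (0, D(P₀‖P₁)) and any ε ∈ (0,1), the minimum over ρ ∈ [0,1] and q,v ∈ Δ satisfying D((1−ρ)q + ρv ‖ P₁) ≤ λ of D₂(ρ‖ε) + (1−ρ)·D(q‖P₀) is equal to the minimum over u ∈ Δ and p ∈ B_KL(P₁, λ) of D(p ‖ (1−ε)P₀ + εu). -/

import Mathlib

open scoped BigOperators ENNReal Classical
open Filter

noncomputable section

/-- The set of probability distributions on a finite alphabet. -/
def simplex (𝒳 : Type*) [Fintype 𝒳] : Set (𝒳 → ℝ) :=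
  {p | (∀ x, 0 ≤ p x) ∧ ∑ x, p x = 1}

/-- Kullback–Leibler divergence, with values in `[0,∞]`. -/
def KL {𝒳 : Type*} [Fintype 𝒳] (p q : 𝒳 → ℝ) : ℝ≥0∞ :=
  if ∀ x, q x = 0 → p x = 0 then
    ENNReal.ofReal (∑ x, p x * Real.log (p x / q x))
  else ⊤

/-- KL ball of radius `r` around `p`. -/
def BKL {𝒳 : Type*} [Fintype 𝒳] (p : 𝒳 → ℝ) (r : ℝ) : Set (𝒳 → ℝ) :=
  {q | q ∈ simplex 𝒳 ∧ KL q p ≤ ENNReal.ofReal r}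

/-- Mixture `(1-a) p + a q`. -/
def mix {𝒳 : Type*} (a : ℝ) (p q : 𝒳 → ℝ) : 𝒳 → ℝ :=
  fun x => (1 - a) * p x + a * q x

/-- Binary KL divergence `D₂(ρ‖ε)`. -/
def D2 (ρ ε : ℝ) : ℝ≥0∞ :=
  KL (fun b : Bool => if b then ρ else 1 - ρ) (fun b : Bool => if b then ε else 1 - ε)

/-- Total variation distance. -/
def dTV {𝒳 : Type*} [Fintype 𝒳] (p q : 𝒳 → ℝ) : ℝ :=
  (∑ x, |p x - q x|) / 2

/-- Empirical type of a string. -/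
def typeOf {𝒳 : Type*} [Fintype 𝒳] [DecidableEq 𝒳] {n : ℕ} (x : Fin n → 𝒳) : 𝒳 → ℝ :=
  fun a => ((Finset.univ.filter fun i => x i = a).card : ℝ) / n

/-- i.i.d. probability of a string. -/
def iid {𝒳 : Type*} [Fintype 𝒳] (P : 𝒳 → ℝ) {n : ℕ} (x : Fin n → 𝒳) : ℝ :=
  ∏ i, P (x i)

/-- Probability of `z` under i.i.d. Bernoulli(ε). -/
def berW (ε : ℝ) {n : ℕ} (z : Fin n → Bool) : ℝ :=
  ∏ i, if z i then ε else 1 - ε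

/-- Hamming weight. -/
def wt {n : ℕ} (z : Fin n → Bool) : ℕ :=
  (Finset.univ.filter fun i => z i = true).card

/-- Probability of `z` under the uniform distribution on weight-⌈nε⌉ binary vectors. -/
def unifW (ε : ℝ) {n : ℕ} (z : Fin n → Bool) : ℝ :=
  if wt z = Nat.ceil ((n : ℝ) * ε) then
    (1 : ℝ) / ((Finset.univ.filter fun z' : Fin n → Bool => wt z' = Nat.ceil ((n : ℝ) * ε)).card : ℝ)
  else 0

/-- `liminf -(1/n) log E(n) ≥ l` (in the extended reals). -/
def ExpLB (E : ℕ → ℝ) (l : ℝ) : Prop :=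
  (l : EReal) ≤ Filter.liminf (fun n : ℕ => ((-(Real.log (E n)) / n : ℝ) : EReal)) Filter.atTop

/-! Given `ρ, q, v`, take `u = v` and `p = (1 - ρ) q + ρ v`: the log-sum inequality applied
pointwise to the two components of `p` and of `(1 - ε) P0 + ε v` bounds `D(p ‖ (1 - ε) P0 + ε v)`
by `D₂(ρ‖ε) + (1 - ρ) D(q‖P0)`. Conversely, given `u` and `p`, split `p` according to the posterior
weights of the two components of `m = (1 - ε) P0 + ε u`. This writes `p = (1 - ρ) q + ρ v`, and
`D(p‖m)` becomes `(1 - ρ) log((1 - ρ)/(1 - ε)) + (1 - ρ) D(q‖P0)` plus the divergence of the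
second part from `ε u`, which the log-sum inequality bounds below by `ρ log(ρ/ε)`. -/

open Real Finset

def klSum {𝒳 : Type*} [Fintype 𝒳] (p q : 𝒳 → ℝ) : ℝ :=
  ∑ x, p x * log (p x / q x)

def bern (ρ : ℝ) : Bool → ℝ :=
  fun b => if b then ρ else 1 - ρ

lemma mul_log_add_sub_le_mul_log_div {a b s : ℝ} (ha : 0 ≤ a) (hb : 0 ≤ b)
    (hab : b = 0 → a = 0) (hs : 0 < s) :
    a * log s + a - s * b ≤ a * log (a / b) := by
  rcases ha.eq_or_lt with rfl | ha
  · simpa using mul_nonneg hs.le hb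
  have hb : 0 < b := hb.lt_of_ne' fun h => ha.ne' (hab h)
  calc a * log s + a - s * b = a * log s + a * (1 - (a / (b * s))⁻¹) := by
        field_simp; ring
    _ ≤ a * log s + a * log (a / (b * s)) := by
        gcongr; exact one_sub_inv_le_log_of_pos (by positivity)
    _ = a * log (a / b) := by
        rw [← mul_add, ← log_mul hs.ne' (by positivity)]
        congr 2
        field_simp

theorem sum_mul_log_div_sum_le {ι : Type*} (s : Finset ι) {a b : ι → ℝ}
    (ha : ∀ i ∈ s, 0 ≤ a i) (hb : ∀ i ∈ s, 0 ≤ b i) (hab : ∀ i ∈ s, b i = 0 → a i = 0) :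
    (∑ i ∈ s, a i) * log ((∑ i ∈ s, a i) / ∑ i ∈ s, b i) ≤ ∑ i ∈ s, a i * log (a i / b i) := by
  rcases (sum_nonneg ha).eq_or_lt with hA | hA
  · have ha0 := (sum_eq_zero_iff_of_nonneg ha).1 hA.symm
    rw [← hA, zero_mul, sum_eq_zero fun i hi => by rw [ha0 i hi, zero_mul]]
  have hB : 0 < ∑ i ∈ s, b i := by
    refine (sum_nonneg hb).lt_of_ne fun hB => hA.ne' ?_
    have hb0 := (sum_eq_zero_iff_of_nonneg hb).1 hB.symm
    exact sum_eq_zero fun i hi => hab i hi (hb0 i hi)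
  set S := (∑ i ∈ s, a i) / ∑ i ∈ s, b i
  calc (∑ i ∈ s, a i) * log S
      = ∑ i ∈ s, (a i * log S + a i - S * b i) := by
        rw [sum_sub_distrib, sum_add_distrib, ← sum_mul, ← mul_sum]
        simp only [S]; field_simp; ring
    _ ≤ ∑ i ∈ s, a i * log (a i / b i) :=
        sum_le_sum fun i hi => mul_log_add_sub_le_mul_log_div (ha i hi) (hb i hi) (hab i hi)
          (by positivity)

lemma add_mul_log_div_add_le {a b c d : ℝ} (ha : 0 ≤ a) (hb : 0 ≤ b) (hc : 0 ≤ c) (hd : 0 ≤ d)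
    (hab : b = 0 → a = 0) (hcd : d = 0 → c = 0) :
    (a + c) * log ((a + c) / (b + d)) ≤ a * log (a / b) + c * log (c / d) := by
  simpa [Fin.sum_univ_two] using sum_mul_log_div_sum_le univ (a := ![a, c]) (b := ![b, d])
    (by simp [Fin.forall_fin_two, ha, hc]) (by simp [Fin.forall_fin_two, hb, hd])
    (by simpa [Fin.forall_fin_two] using ⟨hab, hcd⟩)

section KLSum

variable {𝒳 : Type*} [Fintype 𝒳]

lemma KL_eq_ofReal_klSum (p : 𝒳 → ℝ) {q : 𝒳 → ℝ} (hq : ∀ x, 0 < q x) :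
    KL p q = ENNReal.ofReal (klSum p q) :=
  if_pos fun x hx => absurd hx (hq x).ne'

lemma klSum_nonneg {p q : 𝒳 → ℝ} (hp : p ∈ simplex 𝒳) (hq : q ∈ simplex 𝒳)
    (hpq : ∀ x, q x = 0 → p x = 0) : 0 ≤ klSum p q := by
  simpa [klSum, hp.2, hq.2] using
    sum_mul_log_div_sum_le univ (fun x _ => hp.1 x) (fun x _ => hq.1 x) (fun x _ => hpq x)

lemma klSum_self (p : 𝒳 → ℝ) : klSum p p = 0 :=
  sum_eq_zero fun x _ => by rw [log_div_self, mul_zero]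

lemma mul_mul_log_div_mul_mul {t s q P : ℝ} (hs : s ≠ 0) (hqP : P = 0 → q = 0) :
    t * q * log (t * q / (s * P)) = q * (t * log (t / s)) + t * (q * log (q / P)) := by
  rcases eq_or_ne t 0 with rfl | ht
  · simp
  rcases eq_or_ne q 0 with rfl | hq
  · simp
  rw [mul_div_mul_comm, log_mul (div_ne_zero ht hs) (div_ne_zero hq (mt hqP hq))]
  ring

lemma sum_mul_log_div_mul_eq {t s : ℝ} {q P : 𝒳 → ℝ} (hs : s ≠ 0) (hq : ∑ x, q x = 1)
    (hqP : ∀ x, P x = 0 → q x = 0) :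
    ∑ x, t * q x * log (t * q x / (s * P x)) = t * log (t / s) + t * klSum q P := by
  simp_rw [mul_mul_log_div_mul_mul hs (hqP _)]
  rw [sum_add_distrib, ← sum_mul, hq, one_mul, ← mul_sum]
  rfl

lemma mul_div_mul_log_div_self (p b m : ℝ) :
    p * b / m * log (p * b / m / b) = p * b / m * log (p / m) := by
  rcases eq_or_ne b 0 with rfl | hb
  · simp
  rw [show p * b / m / b = p / m by field_simp]

lemma klSum_add_eq_sum_add_sum (p : 𝒳 → ℝ) {b c : 𝒳 → ℝ} (hbc : ∀ x, b x + c x ≠ 0) :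
    klSum p (fun x => b x + c x) =
      ∑ x, p x * b x / (b x + c x) * log (p x * b x / (b x + c x) / b x) +
        ∑ x, p x * c x / (b x + c x) * log (p x * c x / (b x + c x) / c x) := by
  rw [← sum_add_distrib]
  refine sum_congr rfl fun x _ => ?_
  rw [mul_div_mul_log_div_self, mul_div_mul_log_div_self, ← add_mul, ← add_div, ← mul_add,
    mul_div_cancel_right₀ _ (hbc x)]

lemma exists_mem_simplex_eq_sum_mul {w B : 𝒳 → ℝ} (hw : w ∈ simplex 𝒳) (hB : ∀ x, 0 ≤ B x) :
    ∃ v ∈ simplex 𝒳, ∀ x, B x = (∑ y, B y) * v x := by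
  rcases (sum_nonneg fun x _ => hB x).eq_or_lt with h | h
  · refine ⟨w, hw, fun x => ?_⟩
    rw [← h, zero_mul]
    exact (sum_eq_zero_iff_of_nonneg fun y _ => hB y).1 h.symm x (mem_univ x)
  · refine ⟨fun x => B x / ∑ y, B y, ⟨fun x => div_nonneg (hB x) h.le, ?_⟩, fun x => ?_⟩
    · rw [← sum_div, div_self h.ne']
    · field_simp

end KLSum

lemma mix_pos {𝒳 : Type*} {ε : ℝ} (hε : ε ∈ Set.Ioo (0 : ℝ) 1) {P u : 𝒳 → ℝ}
    (hP : ∀ x, 0 < P x) (hu : ∀ x, 0 ≤ u x) (x : 𝒳) : 0 < mix ε P u x := by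
  have := mul_pos (sub_pos.2 hε.2) (hP x)
  have := mul_nonneg hε.1.le (hu x)
  simp only [mix]; linarith

section Mixture

variable {𝒳 : Type*} [Fintype 𝒳]

lemma mix_mem_simplex {ρ : ℝ} (hρ : ρ ∈ Set.Icc (0 : ℝ) 1) {q v : 𝒳 → ℝ} (hq : q ∈ simplex 𝒳)
    (hv : v ∈ simplex 𝒳) : mix ρ q v ∈ simplex 𝒳 := by
  refine ⟨fun x => ?_, ?_⟩
  · have := mul_nonneg (sub_nonneg.2 hρ.2) (hq.1 x)
    have := mul_nonneg hρ.1 (hv.1 x)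
    simp only [mix]; linarith
  · simp only [mix, sum_add_distrib, ← mul_sum, hq.2, hv.2]
    ring

lemma bern_mem_simplex {ρ : ℝ} (hρ : ρ ∈ Set.Icc (0 : ℝ) 1) : bern ρ ∈ simplex Bool :=
  ⟨fun b => by cases b <;> simp [bern, hρ.1, hρ.2], by simp [bern]⟩

lemma bern_pos {ε : ℝ} (hε : ε ∈ Set.Ioo (0 : ℝ) 1) (b : Bool) : 0 < bern ε b := by
  cases b <;> simp [bern, hε.1, hε.2]

lemma klSum_bern (ρ ε : ℝ) :
    klSum (bern ρ) (bern ε) = ρ * log (ρ / ε) + (1 - ρ) * log ((1 - ρ) / (1 - ε)) := by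
  simp [klSum, bern]

lemma D2_add_mul_KL_eq_ofReal {P q : 𝒳 → ℝ} {ρ ε : ℝ} (hP : P ∈ simplex 𝒳)
    (hP_pos : ∀ x, 0 < P x) (hq : q ∈ simplex 𝒳) (hρ : ρ ∈ Set.Icc (0 : ℝ) 1)
    (hε : ε ∈ Set.Ioo (0 : ℝ) 1) :
    D2 ρ ε + ENNReal.ofReal (1 - ρ) * KL q P =
      ENNReal.ofReal (klSum (bern ρ) (bern ε) + (1 - ρ) * klSum q P) := by
  have h1ρ : 0 ≤ 1 - ρ := sub_nonneg.2 hρ.2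
  have hD2 : D2 ρ ε = KL (bern ρ) (bern ε) := rfl
  rw [hD2, KL_eq_ofReal_klSum _ (bern_pos hε), KL_eq_ofReal_klSum _ hP_pos,
    ← ENNReal.ofReal_mul h1ρ, ← ENNReal.ofReal_add]
  · exact klSum_nonneg (bern_mem_simplex hρ) (bern_mem_simplex ⟨hε.1.le, hε.2.le⟩)
      fun b h => absurd h (bern_pos hε b).ne'
  · exact mul_nonneg h1ρ (klSum_nonneg hq hP fun x h => absurd h (hP_pos x).ne')

end Mixture

section Directions

variable {𝒳 : Type*} [Fintype 𝒳] {P0 : 𝒳 → ℝ} {ε : ℝ}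

lemma klSum_mix_le (hP0 : ∀ x, 0 < P0 x) (hε : ε ∈ Set.Ioo (0 : ℝ) 1) {ρ : ℝ}
    (hρ : ρ ∈ Set.Icc (0 : ℝ) 1) {q v : 𝒳 → ℝ} (hq : q ∈ simplex 𝒳) (hv : v ∈ simplex 𝒳) :
    klSum (mix ρ q v) (mix ε P0 v) ≤ klSum (bern ρ) (bern ε) + (1 - ρ) * klSum q P0 := by
  have h1ρ : 0 ≤ 1 - ρ := sub_nonneg.2 hρ.2
  have h1ε : 0 < 1 - ε := sub_pos.2 hε.2
  calc klSum (mix ρ q v) (mix ε P0 v)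
      ≤ ∑ x, ((1 - ρ) * q x * log ((1 - ρ) * q x / ((1 - ε) * P0 x)) +
          ρ * v x * log (ρ * v x / (ε * v x))) :=
        sum_le_sum fun x _ => add_mul_log_div_add_le (mul_nonneg h1ρ (hq.1 x))
          (mul_pos h1ε (hP0 x)).le (mul_nonneg hρ.1 (hv.1 x)) (mul_nonneg hε.1.le (hv.1 x))
          (fun h => absurd h (mul_pos h1ε (hP0 x)).ne')
          (fun h => by rw [(mul_eq_zero.1 h).resolve_left hε.1.ne', mul_zero])
    _ = ((1 - ρ) * log ((1 - ρ) / (1 - ε)) + (1 - ρ) * klSum q P0) +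
          (ρ * log (ρ / ε) + ρ * klSum v v) := by
        rw [sum_add_distrib, sum_mul_log_div_mul_eq h1ε.ne' hq.2 fun x h => absurd h (hP0 x).ne',
          sum_mul_log_div_mul_eq hε.1.ne' hv.2 fun _ => id]
    _ = klSum (bern ρ) (bern ε) + (1 - ρ) * klSum q P0 := by
        rw [klSum_self, klSum_bern]; ring

lemma exists_mix_eq_and_le_klSum (hP0 : ∀ x, 0 < P0 x) (hε : ε ∈ Set.Ioo (0 : ℝ) 1)
    {u p : 𝒳 → ℝ} (hu : u ∈ simplex 𝒳) (hp : p ∈ simplex 𝒳) :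
    ∃ ρ ∈ Set.Icc (0 : ℝ) 1, ∃ q ∈ simplex 𝒳, ∃ v ∈ simplex 𝒳, mix ρ q v = p ∧
      klSum (bern ρ) (bern ε) + (1 - ρ) * klSum q P0 ≤ klSum p (mix ε P0 u) := by
  have hm := mix_pos hε hP0 hu.1
  set A : 𝒳 → ℝ := fun x => p x * ((1 - ε) * P0 x) / mix ε P0 u x
  set B : 𝒳 → ℝ := fun x => p x * (ε * u x) / mix ε P0 u x
  have hA : ∀ x, 0 ≤ A x := fun x =>
    div_nonneg (mul_nonneg (hp.1 x) (mul_pos (sub_pos.2 hε.2) (hP0 x)).le) (hm x).le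
  have hB : ∀ x, 0 ≤ B x := fun x =>
    div_nonneg (mul_nonneg (hp.1 x) (mul_nonneg hε.1.le (hu.1 x))) (hm x).le
  have hsplit : klSum p (mix ε P0 u) = ∑ x, A x * log (A x / ((1 - ε) * P0 x)) +
      ∑ x, B x * log (B x / (ε * u x)) :=
    klSum_add_eq_sum_add_sum p fun x => (hm x).ne'
  have hAB : ∀ x, A x + B x = p x := fun x => by
    rw [← add_div, ← mul_add]; exact mul_div_cancel_right₀ _ (hm x).ne'
  set ρ := ∑ x, B x
  have hsumA : ∑ x, A x = 1 - ρ := by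
    rw [eq_sub_iff_add_eq, ← sum_add_distrib, sum_congr rfl fun x _ => hAB x, hp.2]
  obtain ⟨q, hq, hqA⟩ := exists_mem_simplex_eq_sum_mul hp hA
  obtain ⟨v, hv, hvB⟩ := exists_mem_simplex_eq_sum_mul hp hB
  rw [hsumA] at hqA
  have hApart : ∑ x, A x * log (A x / ((1 - ε) * P0 x)) =
      (1 - ρ) * log ((1 - ρ) / (1 - ε)) + (1 - ρ) * klSum q P0 := by
    simp_rw [hqA]
    exact sum_mul_log_div_mul_eq (sub_pos.2 hε.2).ne' hq.2 fun x h => absurd h (hP0 x).ne'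
  have hBpart : ρ * log (ρ / ε) ≤ ∑ x, B x * log (B x / (ε * u x)) := by
    simpa [← mul_sum, hu.2] using sum_mul_log_div_sum_le univ (fun x _ => hB x)
      (fun x _ => mul_nonneg hε.1.le (hu.1 x))
      fun x _ h => by simp only [B, (mul_eq_zero.1 h).resolve_left hε.1.ne', mul_zero, zero_div]
  refine ⟨ρ, ⟨sum_nonneg fun x _ => hB x, ?_⟩, q, hq, v, hv, funext fun x => ?_, ?_⟩
  · linarith [sum_nonneg fun x (_ : x ∈ univ) => hA x]
  · rw [mix, ← hqA, ← hvB, hAB]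
  · rw [klSum_bern, hsplit, hApart]; linarith

end Directions

theorem remark1_equality_general {𝒳 : Type*} [Fintype 𝒳]
    (P0 P1 : 𝒳 → ℝ) (hP0 : P0 ∈ simplex 𝒳)
    (hfs0 : ∀ x, 0 < P0 x)
    {ε lam : ℝ} (hε : 0 < ε) (hε1 : ε < 1) :
    (⨅ ρ ∈ Set.Icc (0:ℝ) 1, ⨅ q ∈ simplex 𝒳, ⨅ v ∈ simplex 𝒳,
        ⨅ (_ : KL (mix ρ q v) P1 ≤ ENNReal.ofReal lam),
          D2 ρ ε + ENNReal.ofReal (1 - ρ) * KL q P0) =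
      ⨅ u ∈ simplex 𝒳, ⨅ p ∈ BKL P1 lam, KL p (mix ε P0 u) := by
  have hε' : ε ∈ Set.Ioo (0 : ℝ) 1 := ⟨hε, hε1⟩
  apply le_antisymm
  · refine le_iInf₂ fun u hu => le_iInf₂ fun p hp => ?_
    obtain ⟨ρ, hρ, q, hq, v, hv, rfl, hle⟩ := exists_mix_eq_and_le_klSum hfs0 hε' hu hp.1
    refine iInf₂_le_of_le ρ hρ <| iInf₂_le_of_le q hq <| iInf₂_le_of_le v hv <|
      iInf_le_of_le hp.2 ?_
    rw [D2_add_mul_KL_eq_ofReal hP0 hfs0 hq hρ hε', KL_eq_ofReal_klSum _ (mix_pos hε' hfs0 hu.1)]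
    exact ENNReal.ofReal_le_ofReal hle
  · refine le_iInf₂ fun ρ hρ => le_iInf₂ fun q hq => le_iInf₂ fun v hv => le_iInf fun hKL => ?_
    refine iInf₂_le_of_le v hv <| iInf₂_le_of_le (mix ρ q v) ⟨mix_mem_simplex hρ hq hv, hKL⟩ ?_
    rw [D2_add_mul_KL_eq_ofReal hP0 hfs0 hq hρ hε', KL_eq_ofReal_klSum _ (mix_pos hε' hfs0 hv.1)]
    exact ENNReal.ofReal_le_ofReal (klSum_mix_le hfs0 hε' hρ hq hv)

/-- **Remark 1 equality**: for `λ ∈ (0, D(P0‖P1))` and `ε ∈ (0,1)`, the two minima in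
Claim 2 coincide. -/
theorem remark1_equality {𝒳 : Type*} [Fintype 𝒳] [Nonempty 𝒳]
    (P0 P1 : 𝒳 → ℝ) (hP0 : P0 ∈ simplex 𝒳) (hP1 : P1 ∈ simplex 𝒳)
    (hfs0 : ∀ x, 0 < P0 x) (hfs1 : ∀ x, 0 < P1 x) (hne : P0 ≠ P1)
    {ε lam : ℝ} (hε : 0 < ε) (hε1 : ε < 1)
    (hlam : 0 < lam) (hlam' : ENNReal.ofReal lam < KL P0 P1) :
    (⨅ ρ ∈ Set.Icc (0:ℝ) 1, ⨅ q ∈ simplex 𝒳, ⨅ v ∈ simplex 𝒳,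
        ⨅ (_ : KL (mix ρ q v) P1 ≤ ENNReal.ofReal lam),
          D2 ρ ε + ENNReal.ofReal (1 - ρ) * KL q P0) =
      ⨅ u ∈ simplex 𝒳, ⨅ p ∈ BKL P1 lam, KL p (mix ε P0 u) :=
  remark1_equality_general P0 P1 hP0 hfs0 hε hε1

end
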